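/- arXiv:2203.01204 — 2 statements merged into one kernel-verified Lean document; each statement's English description precedes it below -/
import Mathlib

section
/- Let D and X be odd elements of an associative superalgebra with {D, X} = 2εH (ε = ±1), [H, D] = -D, [H, X] = X, and define for each j an element z_j := 2εx_jH - X·T_j·X where x_j commutes with X and T_j commutes with D, with [D, x_j] = [T_j, X]. Then [D, z_j] = 2εx_jD; i.e., z_j is a generalised symmetry of D. -/
/-- In an osp(1|2) realisation with odd elements `D`, `X` satisfying `{D,X} = 2εH`,
`[H,D] = -D`, `[H,X] = X`, the operator `z_j := 2εx_jH - X·T_j·X` is a generalised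
symmetry of `D`: `[D, z_j] = 2εx_jD`. -/
theorem stmt4 {A : Type*} [Ring A] [Algebra ℂ A]
    (ε : ℂ) (hε : ε ^ 2 = 1)
    (D X H xj Tj : A)
    (hDX : D * X + X * D = (2 * ε) • H)
    (hHD : H * D - D * H = -D)
    (hHX : H * X - X * H = X)
    (hHT : H * Tj - Tj * H = -Tj)
    (hHx : H * xj - xj * H = xj)
    (hxX : xj * X = X * xj)
    (hTD : Tj * D = D * Tj)
    (hbr : D * xj - xj * D = Tj * X - X * Tj)
    (hcomm : (D * X + X * D) * (Tj * X) = (Tj * X) * (D * X + X * D)) :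
    D * ((2 * ε) • (xj * H) - X * Tj * X) - ((2 * ε) • (xj * H) - X * Tj * X) * D
      = (2 * ε) • (xj * D) := by
  linear_combination (norm := (noncomm_ring; match_scalars <;>
      ((try simp only [nsmul_eq_mul, zsmul_eq_mul]); push_cast; ring)))
    (2 * ε) • (hbr * H) - (2 * ε) • (xj * hHD) - (2 * ε) • (Tj * hHX)
      - (2 * ε) • (hHT * X) - hDX * (Tj * X) + X * Tj * hDX - X * hTD * X
end

section
/- The vector operator Z := Σ_{j=1}^d z_je_j satisfies Z = 2εX(E + γ - Σ_{α∈R⁺}κ(α)σ_α) - ε|x|²D, where z_j = 2εx_jH - XT_jX, X = Σx_je_j, D = ΣT_je_j, E the Euler operator, H = E + d/2 + γ. -/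
/-- The vector operator `Z = Σ_j z_j e_j` satisfies
`Z = 2εX(E + γ - Σ_{α∈R⁺}κ(α)σ_α) - ε|x|²D`, where
`z_j = 2εx_j(E + d/2 + γ) - X(e_j + 2εO_j) - ε|x|²T_j`, `X = Σ x_je_j`,
`D = Σ T_je_j`, and `Σ_j O_je_j = Ω = Σ_{α∈R⁺}κ(α)σ_α`. -/
theorem stmt18 {A : Type*} [Ring A] [Algebra ℂ A] {d : ℕ}
    (ε : ℂ) (hε : ε ^ 2 = 1) (γ : ℂ)
    (e x T O : Fin d → A) (Eu Ω R : A)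
    (hcl : ∀ i j, e i * e j + e j * e i
      = ((2 * ε) * (if i = j then 1 else 0)) • (1 : A))
    (hEe : ∀ j, e j * Eu = Eu * e j)
    (hOe : (∑ j, O j * e j) = Ω)
    (hR : R = ε • ((∑ i, x i * e i) * (∑ i, x i * e i)))
    (z : Fin d → A)
    (hz : ∀ j, z j
      = (2 * ε) • (x j * (Eu + ((d : ℂ) / 2 + γ) • (1 : A)))
        - (∑ i, x i * e i) * (e j + (2 * ε) • O j) - ε • (R * T j)) :
    ∑ j, z j * e j
      = (2 * ε) • ((∑ i, x i * e i) * (Eu + γ • (1 : A) - Ω))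
        - ε • (R * (∑ j, T j * e j)) := by
  set X := ∑ i, x i * e i with hX
  have he2 : ∀ j, e j * e j = ε • (1 : A) := by
    intro j
    have h := hcl j j
    simp only [if_pos rfl, mul_one, if_true, eq_self_iff_true] at h
    have h2 : (2 : ℂ) • (e j * e j) = (2 : ℂ) • (ε • (1 : A)) := by
      rw [two_smul, h, smul_smul]
    exact smul_right_injective A (by norm_num) h2
  have hcomm : ∀ j, (Eu + ((d : ℂ) / 2 + γ) • (1 : A)) * e j
      = e j * (Eu + ((d : ℂ) / 2 + γ) • (1 : A)) := by
    intro j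
    rw [add_mul, mul_add, hEe, smul_mul_assoc, mul_smul_comm, one_mul, mul_one]
  have step : ∀ j, z j * e j
      = (2 * ε) • (x j * e j * (Eu + ((d : ℂ) / 2 + γ) • (1 : A)))
        - (X * (e j * e j) + (2 * ε) • (X * (O j * e j)))
        - ε • (R * (T j * e j)) := by
    intro j
    rw [hz j]
    simp only [sub_mul, smul_mul_assoc, mul_add, add_mul, mul_smul_comm, mul_assoc,
      hEe, one_mul, mul_one]
  calc ∑ j, z j * e j
      = (2 * ε) • ((∑ j, x j * e j) * (Eu + ((d : ℂ) / 2 + γ) • (1 : A)))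
        - (X * (∑ j, e j * e j) + (2 * ε) • (X * ∑ j, O j * e j))
        - ε • (R * ∑ j, T j * e j) := by
        simp only [step, Finset.sum_sub_distrib, Finset.sum_add_distrib,
          ← Finset.smul_sum, ← Finset.sum_mul, ← Finset.mul_sum]
    _ = (2 * ε) • (X * (Eu + ((d : ℂ) / 2 + γ) • (1 : A)))
        - ((d : ℂ) • (ε • X) + (2 * ε) • (X * Ω))
        - ε • (R * ∑ j, T j * e j) := by
        rw [hOe, ← hX]
        have hsum : (∑ j : Fin d, e j * e j) = ((d : ℂ) * ε) • (1 : A) := by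
          rw [Finset.sum_congr rfl (fun j _ => he2 j), Finset.sum_const,
            Finset.card_univ, Fintype.card_fin, ← Nat.cast_smul_eq_nsmul ℂ, smul_smul]
        rw [hsum, mul_smul_comm, mul_one]
        module
    _ = (2 * ε) • (X * (Eu + γ • (1 : A) - Ω)) - ε • (R * ∑ j, T j * e j) := by
        simp only [mul_add, mul_sub, smul_add, smul_sub, smul_smul, mul_smul_comm, mul_one]
        have : (d : ℂ) * ε = 2 * ε * ((d : ℂ) / 2) := by ring
        rw [this]
        module
end
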